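/- Let 𝒜 be a compact IRU-set of strictly positive N×N matrices, and let 𝒜̃ be a compact set with 𝒜 ⊆ 𝒜̃ ⊆ co(𝒜). Then for every n ≥ 1, inf_{A_i∈𝒜̃} ρ(A_n⋯A_1)^{1/n} = min_{A∈𝒜} ρ(A); consequently the lower spectral radius of 𝒜̃ equals min_{A∈𝒜} ρ(A), i.e., the finiteness property holds at n = 1 for the lower spectral radius of compact positive IRU-sets. -/

import Mathlib

open Matrix

/-- Spectral radius of a real square matrix: the maximum modulus of its
(complex) eigenvalues, i.e. of the roots of the characteristic polynomial of
its complexification. -/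
noncomputable def specRad {N : ℕ} (A : Matrix (Fin N) (Fin N) ℝ) : ℝ :=
  sSup {r : ℝ | ∃ μ : ℂ, (A.map Complex.ofReal).charpoly.IsRoot μ ∧ r = ‖μ‖}

/-- An independent row uncertainty (IRU) set of matrices: the set of all
matrices whose `i`-th row belongs to a prescribed set of rows `rows i`. -/
def IsIRU {N M : ℕ} (S : Set (Matrix (Fin N) (Fin M) ℝ)) : Prop :=
  ∃ rows : Fin N → Set (Fin M → ℝ), S = {A | ∀ i, A i ∈ rows i}

/-- Lower spectral radius (joint spectral subradius) of a set of matrices,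
expressed via spectral radii of finite products. -/
noncomputable def lsr {N : ℕ} (S : Set (Matrix (Fin N) (Fin N) ℝ)) : ℝ :=
  sInf {r : ℝ | ∃ n : ℕ, 1 ≤ n ∧ ∃ A : Fin n → Matrix (Fin N) (Fin N) ℝ,
    (∀ i, A i ∈ S) ∧ r = specRad ((List.ofFn A).reverse.prod) ^ ((n : ℝ)⁻¹)}

/-! The rows of `S` define the concave, positively homogeneous map
`rowMin : x ↦ (min_{a ∈ S_i} a ⬝ᵥ x)_i`. Maximizing `t` subject to `t • x ≤ rowMin x` over the
standard simplex gives, as in the Collatz–Wielandt proof of Perron's theorem, a positive vector `v`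
with `rowMin v = r • v`. Taking a minimizing row for every `i` yields `B ∈ S` with `B v = r v`,
so `ρ(Bⁿ) ≤ rⁿ`. Conversely `r v ≤ A v` is a convex condition satisfied on `S`, hence on
`T ⊆ co S`, so every product `P` of `n` matrices of `T` is positive with `rⁿ v ≤ P v`; pairing with
a positive left Perron vector `w` of `P` (the singleton-row case of the same construction) gives
`rⁿ ≤ ρ(P)`. -/

noncomputable def rowMin {ι : Type*} [Fintype ι] (rows : ι → Set (ι → ℝ)) (x : ι → ℝ) :
    ι → ℝ :=
  fun i => sInf ((· ⬝ᵥ x) '' rows i)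

section RowMin

variable {ι : Type*} [Fintype ι] {rows : ι → Set (ι → ℝ)}

lemma ne_zero_of_mem_stdSimplex {x : ι → ℝ} (hx : x ∈ stdSimplex ℝ ι) : x ≠ 0 :=
  fun h => by simpa [h] using hx.2

lemma dotProduct_pos_of_pos_of_nonneg {a x : ι → ℝ} (ha : ∀ j, 0 < a j) (hx : 0 ≤ x) (hx0 : x ≠ 0) :
    0 < a ⬝ᵥ x := by
  obtain ⟨j, hj⟩ := Function.ne_iff.1 hx0
  exact Finset.sum_pos' (fun k _ => mul_nonneg (ha k).le (hx k))
    ⟨j, Finset.mem_univ j, mul_pos (ha j) ((hx j).lt_of_ne' hj)⟩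

lemma rowMin_le (hK : ∀ i, IsCompact (rows i)) {i : ι} {a : ι → ℝ} (ha : a ∈ rows i)
    (x : ι → ℝ) : rowMin rows x i ≤ a ⬝ᵥ x :=
  csInf_le ((hK i).image (continuous_id.dotProduct continuous_const)).bddBelow ⟨a, ha, rfl⟩

lemma le_rowMin (hne : ∀ i, (rows i).Nonempty) {i : ι} {x : ι → ℝ} {c : ℝ}
    (h : ∀ a ∈ rows i, c ≤ a ⬝ᵥ x) : c ≤ rowMin rows x i :=
  le_csInf ((hne i).image _) (by rintro _ ⟨a, ha, rfl⟩; exact h a ha)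

lemma exists_dotProduct_eq_rowMin (hK : ∀ i, IsCompact (rows i))
    (hne : ∀ i, (rows i).Nonempty) (x : ι → ℝ) (i : ι) :
    ∃ a ∈ rows i, a ⬝ᵥ x = rowMin rows x i := by
  obtain ⟨a, ha, hmin⟩ :=
    (hK i).exists_isMinOn (hne i) (continuous_id.dotProduct continuous_const).continuousOn
  exact ⟨a, ha, le_antisymm (le_rowMin hne fun b hb => hmin hb) (rowMin_le hK ha x)⟩

lemma continuous_rowMin (hK : ∀ i, IsCompact (rows i)) : Continuous (rowMin rows) :=
  continuous_pi fun i => (hK i).continuous_sInf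
    (continuous_snd.dotProduct continuous_fst :
      Continuous fun p : (ι → ℝ) × (ι → ℝ) => p.2 ⬝ᵥ p.1)

lemma rowMin_pos (hK : ∀ i, IsCompact (rows i)) (hne : ∀ i, (rows i).Nonempty)
    (hpos : ∀ i, ∀ a ∈ rows i, ∀ j, 0 < a j) {x : ι → ℝ} (hx : 0 ≤ x) (hx0 : x ≠ 0) (i : ι) :
    0 < rowMin rows x i := by
  obtain ⟨a, ha, hax⟩ := exists_dotProduct_eq_rowMin hK hne x i
  exact hax ▸ dotProduct_pos_of_pos_of_nonneg (hpos i a ha) hx hx0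

lemma rowMin_add_rowMin_le (hK : ∀ i, IsCompact (rows i)) (hne : ∀ i, (rows i).Nonempty)
    (x y : ι → ℝ) : rowMin rows x + rowMin rows y ≤ rowMin rows (x + y) := fun i =>
  le_rowMin hne fun a ha => by
    rw [dotProduct_add]
    exact add_le_add (rowMin_le hK ha x) (rowMin_le hK ha y)

lemma smul_rowMin_le (hK : ∀ i, IsCompact (rows i)) (hne : ∀ i, (rows i).Nonempty)
    {c : ℝ} (hc : 0 ≤ c) (x : ι → ℝ) : c • rowMin rows x ≤ rowMin rows (c • x) := fun i =>
  le_rowMin hne fun a ha => by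
    rw [dotProduct_smul, smul_eq_mul]
    exact mul_le_mul_of_nonneg_left (rowMin_le hK ha x) hc

variable (hK : ∀ i, IsCompact (rows i)) (hne : ∀ i, (rows i).Nonempty)
  (hpos : ∀ i, ∀ a ∈ rows i, ∀ j, 0 < a j)
include hK hne hpos

/-- Wielandt's improvement step: `y = rowMin rows x` admits a larger `t`, because `rowMin rows`
is superadditive and strictly positive on the nonzero defect `y - t • x`. -/
lemma exists_gt_of_smul_le_rowMin [Nonempty ι] {x : ι → ℝ} (hx : x ∈ stdSimplex ℝ ι) {t : ℝ}
    (ht : 0 ≤ t) (hle : t • x ≤ rowMin rows x) (hstrict : t • x ≠ rowMin rows x) :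
    ∃ z ∈ stdSimplex ℝ ι, ∃ t' > t, t' • z ≤ rowMin rows z := by
  set y := rowMin rows x
  have hy : ∀ i, 0 < y i := rowMin_pos hK hne hpos hx.1 (ne_zero_of_mem_stdSimplex hx)
  set w := y - t • x
  have hw : ∀ i, 0 < rowMin rows w i :=
    rowMin_pos hK hne hpos (sub_nonneg.2 hle) (sub_ne_zero.2 hstrict.symm)
  have hyy : t • y + rowMin rows w ≤ rowMin rows y := calc
    t • y + rowMin rows w ≤ rowMin rows (t • x) + rowMin rows w :=
      add_le_add (smul_rowMin_le hK hne ht x) le_rfl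
    _ ≤ rowMin rows (t • x + w) := rowMin_add_rowMin_le hK hne _ _
    _ = rowMin rows y := by rw [add_sub_cancel]
  set ε := Finset.univ.inf' Finset.univ_nonempty fun i => rowMin rows w i / y i
  have hε : 0 < ε := (Finset.lt_inf'_iff _).2 fun i _ => div_pos (hw i) (hy i)
  have hyε : (t + ε) • y ≤ rowMin rows y := fun i => by
    have hεi : ε * y i ≤ rowMin rows w i :=
      (le_div_iff₀ (hy i)).1 (Finset.inf'_le _ (Finset.mem_univ i))
    have hyyi := hyy i
    simp only [Pi.add_apply, Pi.smul_apply, smul_eq_mul] at hyyi ⊢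
    linarith
  set s := ∑ i, y i
  have hs : 0 < s := Finset.sum_pos (fun i _ => hy i) Finset.univ_nonempty
  refine ⟨s⁻¹ • y, ⟨fun i => mul_nonneg (inv_nonneg.2 hs.le) (hy i).le, ?_⟩, t + ε, by linarith, ?_⟩
  · simp only [Pi.smul_apply, smul_eq_mul, ← Finset.mul_sum, inv_mul_cancel₀ hs.ne', s]
  · calc (t + ε) • s⁻¹ • y = s⁻¹ • (t + ε) • y := smul_comm _ _ _
      _ ≤ s⁻¹ • rowMin rows y := smul_le_smul_of_nonneg_left hyε (by positivity)
      _ ≤ rowMin rows (s⁻¹ • y) := smul_rowMin_le hK hne (by positivity) y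

theorem exists_rowMin_eq_smul [Nonempty ι] :
    ∃ v : ι → ℝ, ∃ r : ℝ, (∀ i, 0 < v i) ∧ 0 < r ∧ rowMin rows v = r • v := by
  classical
  set F := {p : (ι → ℝ) × ℝ | p.1 ∈ stdSimplex ℝ ι ∧ 0 ≤ p.2 ∧ p.2 • p.1 ≤ rowMin rows p.1}
  obtain ⟨C, hC⟩ := (isCompact_stdSimplex ℝ ι).bddAbove_image (continuous_finsetSum _
    fun i _ => (continuous_apply i).comp (continuous_rowMin hK)).continuousOn
  have hFsub : F ⊆ stdSimplex ℝ ι ×ˢ Set.Icc 0 C := by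
    rintro ⟨x, t⟩ ⟨hx, ht, hle⟩
    refine ⟨hx, ht, ?_⟩
    calc t = ∑ i, (t • x) i := by simp [← Finset.mul_sum, hx.2]
      _ ≤ ∑ i, rowMin rows x i := Finset.sum_le_sum fun i _ => hle i
      _ ≤ C := hC ⟨x, hx, rfl⟩
  have hFclosed : IsClosed F :=
    ((isClosed_stdSimplex ℝ ι).preimage continuous_fst).inter
      ((isClosed_le continuous_const continuous_snd).inter
        (isClosed_le (continuous_snd.smul continuous_fst)
          ((continuous_rowMin hK).comp continuous_fst)))
  have hFcompact : IsCompact F :=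
    ((isCompact_stdSimplex ℝ ι).prod isCompact_Icc).of_isClosed_subset hFclosed hFsub
  obtain ⟨i₀⟩ := ‹Nonempty ι›
  have hFne : F.Nonempty := by
    have hx := single_mem_stdSimplex ℝ i₀
    refine ⟨(Pi.single i₀ 1, 0), hx, le_rfl, fun i => ?_⟩
    simpa using (rowMin_pos hK hne hpos hx.1 (ne_zero_of_mem_stdSimplex hx) i).le
  obtain ⟨⟨v, r⟩, ⟨hv, hr, hle⟩, hmax⟩ :=
    hFcompact.exists_isMaxOn hFne continuous_snd.continuousOn
  have heq : r • v = rowMin rows v := by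
    by_contra hstrict
    obtain ⟨z, hz, t, hrt, hzt⟩ := exists_gt_of_smul_le_rowMin hK hne hpos hv hr hle hstrict
    exact (isMaxOn_iff.1 hmax (z, t) ⟨hz, hr.trans hrt.le, hzt⟩).not_gt hrt
  have hrv : ∀ i, 0 < r * v i := fun i =>
    (rowMin_pos hK hne hpos hv.1 (ne_zero_of_mem_stdSimplex hv) i).trans_eq (congrFun heq i).symm
  exact ⟨v, r, fun i => pos_of_mul_pos_right (hrv i) hr,
    pos_of_mul_pos_left (hrv i₀) (hv.1 i₀), heq.symm⟩

end RowMin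

theorem exists_pos_mulVec_eq_smul {ι : Type*} [Fintype ι] [Nonempty ι] {Q : Matrix ι ι ℝ}
    (hQ : ∀ i j, 0 < Q i j) :
    ∃ w : ι → ℝ, ∃ κ : ℝ, (∀ i, 0 < w i) ∧ 0 < κ ∧ Q *ᵥ w = κ • w := by
  have hrow (x : ι → ℝ) : rowMin (fun i => {Q i}) x = Q *ᵥ x := by
    ext i
    simp [rowMin, mulVec]
  obtain ⟨w, κ, hw, hκ, hwκ⟩ := exists_rowMin_eq_smul (fun _ => isCompact_singleton)
    (fun _ => Set.singleton_nonempty _) (by simpa using hQ)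
  exact ⟨w, κ, hw, hκ, hrow w ▸ hwκ⟩

theorem Matrix.isRoot_charpoly_iff_exists_mulVec_eq_smul {R n : Type*} [CommRing R] [IsDomain R]
    [Fintype n] [DecidableEq n] (M : Matrix n n R) (μ : R) :
    M.charpoly.IsRoot μ ↔ ∃ x ≠ 0, M *ᵥ x = μ • x := by
  rw [Polynomial.IsRoot, eval_charpoly, ← exists_mulVec_eq_zero_iff]
  simp [sub_mulVec, sub_eq_zero, eq_comm]

section SpectralRadius

variable {N : ℕ}

lemma norm_le_specRad {A : Matrix (Fin N) (Fin N) ℝ} {μ : ℂ}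
    (h : (A.map Complex.ofReal).charpoly.IsRoot μ) : ‖μ‖ ≤ specRad A := by
  have hfin := (Polynomial.finite_setOfPred_isRoot
    (A.map Complex.ofReal).charpoly_monic.ne_zero).image (‖·‖)
  refine le_csSup (hfin.subset ?_).bddAbove ⟨μ, h, rfl⟩
  rintro _ ⟨ν, hν, rfl⟩
  exact ⟨ν, hν, rfl⟩

lemma specRad_nonneg (A : Matrix (Fin N) (Fin N) ℝ) : 0 ≤ specRad A :=
  Real.sSup_nonneg (by rintro _ ⟨μ, -, rfl⟩; exact norm_nonneg μ)

lemma specRad_le {A : Matrix (Fin N) (Fin N) ℝ} {c : ℝ} (hc : 0 ≤ c)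
    (h : ∀ μ : ℂ, (A.map Complex.ofReal).charpoly.IsRoot μ → ‖μ‖ ≤ c) : specRad A ≤ c :=
  Real.sSup_le (by rintro _ ⟨μ, hμ, rfl⟩; exact h μ hμ) hc

lemma specRad_transpose (A : Matrix (Fin N) (Fin N) ℝ) : specRad Aᵀ = specRad A := by
  simp only [specRad, transpose_map, charpoly_transpose]

lemma abs_le_specRad_of_mulVec_eq_smul {A : Matrix (Fin N) (Fin N) ℝ} {x : Fin N → ℝ} {κ : ℝ}
    (hx : x ≠ 0) (h : A *ᵥ x = κ • x) : |κ| ≤ specRad A := by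
  have hroot : A.charpoly.IsRoot κ := (A.isRoot_charpoly_iff_exists_mulVec_eq_smul κ).2 ⟨x, hx, h⟩
  have := norm_le_specRad (μ := κ) (A := A) (by
    rw [show A.map Complex.ofReal = A.map Complex.ofRealHom from rfl, charpoly_map]
    exact Polynomial.IsRoot.map hroot)
  simpa using this

lemma specRad_le_of_mulVec_le {A : Matrix (Fin N) (Fin N) ℝ} {v : Fin N → ℝ} {c : ℝ}
    (hA : ∀ i j, 0 ≤ A i j) (hv : ∀ i, 0 < v i) (hc : 0 ≤ c) (h : A *ᵥ v ≤ c • v) :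
    specRad A ≤ c := by
  refine specRad_le hc fun μ hμ => ?_
  -- compare an eigenvector `x` with `v` at an index maximizing `‖x i‖ / v i`
  obtain ⟨x, hx0, hx⟩ := ((A.map Complex.ofReal).isRoot_charpoly_iff_exists_mulVec_eq_smul μ).1 hμ
  obtain ⟨i₀, hi₀⟩ := Function.ne_iff.1 hx0
  obtain ⟨i, -, hi⟩ := Finset.univ.exists_max_image (fun i => ‖x i‖ / v i) ⟨i₀, Finset.mem_univ _⟩
  set r := ‖x i‖ / v i
  have hxr : ∀ j, ‖x j‖ ≤ r * v j := fun j =>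
    (div_le_iff₀ (hv j)).1 (hi j (Finset.mem_univ j))
  have hxi : 0 < ‖x i‖ := by
    have : 0 < ‖x i₀‖ / v i₀ := div_pos (norm_pos_iff.2 hi₀) (hv i₀)
    exact (div_pos_iff_of_pos_right (hv i)).1 (this.trans_le (hi i₀ (Finset.mem_univ _)))
  have hr : 0 ≤ r := div_nonneg (norm_nonneg _) (hv i).le
  have hbound : ‖μ‖ * ‖x i‖ ≤ c * ‖x i‖ := calc
    ‖μ‖ * ‖x i‖ = ‖∑ j, (A i j : ℂ) * x j‖ := by
      rw [← norm_mul, ← smul_eq_mul, ← Pi.smul_apply, ← hx]; rfl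
    _ ≤ ∑ j, A i j * ‖x j‖ := by
      refine (norm_sum_le _ _).trans_eq (Finset.sum_congr rfl fun j _ => ?_)
      rw [norm_mul, Complex.norm_real, Real.norm_of_nonneg (hA i j)]
    _ ≤ ∑ j, A i j * (r * v j) :=
      Finset.sum_le_sum fun j _ => mul_le_mul_of_nonneg_left (hxr j) (hA i j)
    _ = r * (A *ᵥ v) i := by
      simp only [mulVec, dotProduct, Finset.mul_sum]
      exact Finset.sum_congr rfl fun j _ => by ring
    _ ≤ r * (c * v i) := mul_le_mul_of_nonneg_left (h i) hr
    _ = c * ‖x i‖ := by rw [mul_left_comm, div_mul_cancel₀ _ (hv i).ne']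
  exact le_of_mul_le_mul_right hbound hxi

lemma le_specRad_of_smul_le_mulVec [NeZero N] {Q : Matrix (Fin N) (Fin N) ℝ} {v : Fin N → ℝ}
    {c : ℝ} (hQ : ∀ i j, 0 < Q i j) (hv : ∀ i, 0 < v i) (h : c • v ≤ Q *ᵥ v) :
    c ≤ specRad Q := by
  obtain ⟨w, κ, hw, -, hwQ⟩ := exists_pos_mulVec_eq_smul (Q := Qᵀ) fun i j => hQ j i
  have hwv : 0 < w ⬝ᵥ v :=
    dotProduct_pos_of_pos_of_nonneg hw (fun i => (hv i).le) fun h => (hv 0).ne' (congrFun h 0)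
  have hcκ : c * (w ⬝ᵥ v) ≤ κ * (w ⬝ᵥ v) := calc
    c * (w ⬝ᵥ v) = w ⬝ᵥ (c • v) := by rw [dotProduct_smul, smul_eq_mul]
    _ ≤ w ⬝ᵥ (Q *ᵥ v) := dotProduct_le_dotProduct_of_nonneg_left h fun i => (hw i).le
    _ = κ * (w ⬝ᵥ v) := by
      rw [dotProduct_mulVec, ← mulVec_transpose, hwQ, smul_dotProduct, smul_eq_mul]
  calc c ≤ κ := le_of_mul_le_mul_right hcκ hwv
    _ ≤ |κ| := le_abs_self κ
    _ ≤ specRad Qᵀ :=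
      abs_le_specRad_of_mulVec_eq_smul (fun h => (hw 0).ne' (congrFun h 0)) hwQ
    _ = specRad Q := specRad_transpose Q

end SpectralRadius

section Products

variable {m n : Type*}

lemma convex_setOf_forall_pos : Convex ℝ {A : Matrix m n ℝ | ∀ i j, 0 < A i j} := by
  simp only [Set.ofPred_forall]
  exact convex_iInter fun i => convex_iInter fun j =>
    convex_halfSpace_gt (entryLinearMap ℝ ℝ i j).isLinear 0

variable [Fintype n]

lemma convex_setOf_le_mulVec (w : m → ℝ) (v : n → ℝ) :
    Convex ℝ {A : Matrix m n ℝ | w ≤ A *ᵥ v} :=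
  convex_halfSpace_ge ⟨fun A B => add_mulVec A B v, fun c A => smul_mulVec c A v⟩ w

lemma mulVec_mono_of_nonneg {A : Matrix m n ℝ} (hA : ∀ i j, 0 ≤ A i j) {x y : n → ℝ}
    (hxy : x ≤ y) : A *ᵥ x ≤ A *ᵥ y :=
  fun i => dotProduct_le_dotProduct_of_nonneg_left hxy (hA i)

lemma pow_mulVec_eq_smul [DecidableEq n] {A : Matrix n n ℝ} {v : n → ℝ} {c : ℝ}
    (h : A *ᵥ v = c • v) (k : ℕ) :
    A ^ k *ᵥ v = c ^ k • v := by
  induction k with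
  | zero => simp
  | succ k ih => rw [pow_succ, ← mulVec_mulVec, h, mulVec_smul, ih, smul_smul, pow_succ']

lemma list_prod_pos [DecidableEq n] {L : List (Matrix n n ℝ)} (hL : L ≠ [])
    (h : ∀ A ∈ L, ∀ i j, 0 < A i j) :
    ∀ i j, 0 < L.prod i j := by
  induction L with
  | nil => exact absurd rfl hL
  | cons A L ih =>
    rw [List.prod_cons]
    rcases eq_or_ne L [] with rfl | hL'
    · simpa using h A (by simp)
    · have hA := h A List.mem_cons_self
      have hLprod := ih hL' fun B hB => h B (List.mem_cons_of_mem _ hB)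
      exact fun i j => Finset.sum_pos (fun k _ => mul_pos (hA i k) (hLprod k j))
        ⟨i, Finset.mem_univ _⟩

lemma pow_smul_le_list_prod_mulVec [DecidableEq n] {L : List (Matrix n n ℝ)} {v : n → ℝ} {c : ℝ}
    (hc : 0 ≤ c)    (h : ∀ A ∈ L, (∀ i j, 0 ≤ A i j) ∧ c • v ≤ A *ᵥ v) :
    c ^ L.length • v ≤ L.prod *ᵥ v := by
  induction L with
  | nil => simp
  | cons A L ih =>
    obtain ⟨hA0, hA⟩ := h A List.mem_cons_self
    calc c ^ (A :: L).length • v = c ^ L.length • c • v := by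
          rw [List.length_cons, pow_succ, mul_smul]
      _ ≤ c ^ L.length • (A *ᵥ v) := smul_le_smul_of_nonneg_left hA (pow_nonneg hc _)
      _ = A *ᵥ (c ^ L.length • v) := (mulVec_smul _ _ _).symm
      _ ≤ A *ᵥ (L.prod *ᵥ v) :=
          mulVec_mono_of_nonneg hA0 (ih fun B hB => h B (List.mem_cons_of_mem _ hB))
      _ = (A :: L).prod *ᵥ v := by rw [List.prod_cons, mulVec_mulVec]

end Products

lemma IsIRU.mem_of_forall_exists_row_eq {N M : ℕ} {S : Set (Matrix (Fin N) (Fin M) ℝ)}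
    (hS : IsIRU S) {B : Matrix (Fin N) (Fin M) ℝ} (hB : ∀ i, ∃ A ∈ S, A i = B i) : B ∈ S := by
  obtain ⟨rows, rfl⟩ := hS
  intro i
  obtain ⟨A, hA, hAi⟩ := hB i
  exact hAi ▸ hA i

section IRU

variable {N : ℕ} {S T : Set (Matrix (Fin N) (Fin N) ℝ)}

theorem IsIRU.exists_attained_lowerBound_specRad_prod_of_neZero [NeZero N] (hS : IsIRU S)
    (hScomp : IsCompact S) (hSne : S.Nonempty) (hpos : ∀ A ∈ S, ∀ i j, 0 < A i j)
    (hTco : T ⊆ convexHull ℝ S) :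
    ∃ r, 0 ≤ r ∧ ∃ B ∈ S, (∀ n, 1 ≤ n → specRad (B ^ n) ≤ r ^ n) ∧
      ∀ L : List (Matrix (Fin N) (Fin N) ℝ), L ≠ [] → (∀ A ∈ L, A ∈ T) →
        r ^ L.length ≤ specRad L.prod := by
  set rows : Fin N → Set (Fin N → ℝ) := fun i => (· i) '' S
  have hK : ∀ i, IsCompact (rows i) := fun i => hScomp.image (continuous_apply i)
  have hne : ∀ i, (rows i).Nonempty := fun i => hSne.image _
  have hrows : ∀ i, ∀ a ∈ rows i, ∀ j, 0 < a j := by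
    rintro i _ ⟨A, hA, rfl⟩ j
    exact hpos A hA i j
  obtain ⟨v, r, hv, hr, hvr⟩ := exists_rowMin_eq_smul hK hne hrows
  choose b hb hbv using exists_dotProduct_eq_rowMin hK hne v
  have hBS : Matrix.of b ∈ S := hS.mem_of_forall_exists_row_eq hb
  have hBv : Matrix.of b *ᵥ v = r • v := hvr ▸ funext hbv
  have hT : T ⊆ {A | ∀ i j, 0 < A i j} ∩ {A | r • v ≤ A *ᵥ v} :=
    hTco.trans <| convexHull_min
      (fun A hA => ⟨hpos A hA, hvr ▸ fun i => rowMin_le hK ⟨A, hA, rfl⟩ v⟩)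
      (convex_setOf_forall_pos.inter (convex_setOf_le_mulVec _ _))
  refine ⟨r, hr.le, Matrix.of b, hBS, fun n hn => ?_, fun L hL hLT => ?_⟩
  · have hBpos : ∀ i j, 0 < (Matrix.of b ^ n) i j := by
      simpa using list_prod_pos (L := List.replicate n (Matrix.of b))
        (by simpa using Nat.one_le_iff_ne_zero.1 hn)
        fun A hA => List.eq_of_mem_replicate hA ▸ hpos _ hBS
    exact specRad_le_of_mulVec_le (fun i j => (hBpos i j).le) hv (pow_nonneg hr.le n)
      (pow_mulVec_eq_smul hBv n).le
  · have hLT' : ∀ A ∈ L, (∀ i j, 0 < A i j) ∧ r • v ≤ A *ᵥ v := fun A hA => hT (hLT A hA)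
    exact le_specRad_of_smul_le_mulVec (list_prod_pos hL fun A hA => (hLT' A hA).1) hv
      (pow_smul_le_list_prod_mulVec hr.le fun A hA =>
        ⟨fun i j => ((hLT' A hA).1 i j).le, (hLT' A hA).2⟩)

theorem IsIRU.exists_attained_lowerBound_specRad_prod (hS : IsIRU S) (hScomp : IsCompact S)
    (hSne : S.Nonempty) (hpos : ∀ A ∈ S, ∀ i j, 0 < A i j) (hTco : T ⊆ convexHull ℝ S) :
    ∃ r, 0 ≤ r ∧ ∃ B ∈ S, (∀ n, 1 ≤ n → specRad (B ^ n) ≤ r ^ n) ∧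
      ∀ L : List (Matrix (Fin N) (Fin N) ℝ), L ≠ [] → (∀ A ∈ L, A ∈ T) →
        r ^ L.length ≤ specRad L.prod := by
  rcases eq_or_ne N 0 with rfl | hN
  · obtain ⟨B, hB⟩ := hSne
    refine ⟨0, le_rfl, B, hB, fun n _ => ?_, fun L hL _ => ?_⟩
    · exact specRad_le_of_mulVec_le (v := 0) finZeroElim finZeroElim (pow_nonneg le_rfl n)
        finZeroElim
    · rw [zero_pow (by simpa using hL)]
      exact specRad_nonneg _
  · have : NeZero N := ⟨hN⟩
    exact hS.exists_attained_lowerBound_specRad_prod_of_neZero hScomp hSne hpos hTco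

lemma isLeast_specRad_prod_rpow {r : ℝ} {B : Matrix (Fin N) (Fin N) ℝ} (hr : 0 ≤ r) (hB : B ∈ T)
    (hBpow : ∀ n, 1 ≤ n → specRad (B ^ n) ≤ r ^ n)
    (hprod : ∀ L : List (Matrix (Fin N) (Fin N) ℝ), L ≠ [] → (∀ A ∈ L, A ∈ T) →
      r ^ L.length ≤ specRad L.prod) {n : ℕ} (hn : 1 ≤ n) :
    IsLeast {x : ℝ | ∃ A : Fin n → Matrix (Fin N) (Fin N) ℝ,
      (∀ i, A i ∈ T) ∧ x = specRad ((List.ofFn A).reverse.prod) ^ ((n : ℝ)⁻¹)} r := by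
  have hn' : (0 : ℝ) < n := by exact_mod_cast hn
  have hlow : ∀ A : Fin n → Matrix (Fin N) (Fin N) ℝ, (∀ i, A i ∈ T) →
      r ≤ specRad ((List.ofFn A).reverse.prod) ^ ((n : ℝ)⁻¹) := fun A hA => by
    rw [Real.le_rpow_inv_iff_of_pos hr (specRad_nonneg _) hn', Real.rpow_natCast]
    simpa using hprod (List.ofFn A).reverse (by simp; omega) (by simpa using hA)
  refine ⟨⟨fun _ => B, fun _ => hB, le_antisymm (hlow _ fun _ => hB) ?_⟩, ?_⟩
  · rw [Real.rpow_inv_le_iff_of_pos (specRad_nonneg _) hr hn', Real.rpow_natCast]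
    simpa using hBpow n hn
  · rintro x ⟨A, hA, rfl⟩
    exact hlow A hA

end IRU

theorem stmt_19_general {N : ℕ} (S T : Set (Matrix (Fin N) (Fin N) ℝ)) (hS : IsIRU S)
    (hScomp : IsCompact S) (hSne : S.Nonempty)
    (hpos : ∀ A ∈ S, ∀ i j, 0 < A i j)
    (hST : S ⊆ T) (hTco : T ⊆ convexHull ℝ S) :
    (∀ n : ℕ, 1 ≤ n →
        sInf {r : ℝ | ∃ A : Fin n → Matrix (Fin N) (Fin N) ℝ,
            (∀ i, A i ∈ T) ∧ r = specRad ((List.ofFn A).reverse.prod) ^ ((n : ℝ)⁻¹)}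
          = sInf (specRad '' S)) ∧
    lsr T = sInf (specRad '' S) := by
  obtain ⟨r, hr, B, hB, hBpow, hprod⟩ :=
    hS.exists_attained_lowerBound_specRad_prod hScomp hSne hpos hTco
  have hleast n (hn : 1 ≤ n) := isLeast_specRad_prod_rpow hr (hST hB) hBpow hprod hn
  have hleastS : IsLeast (specRad '' S) r := by
    refine ⟨⟨B, hB, le_antisymm (by simpa using hBpow 1 le_rfl) ?_⟩, ?_⟩
    · simpa using hprod [B] (by simp) (by simpa using hST hB)
    · rintro _ ⟨A, hA, rfl⟩
      simpa using hprod [A] (by simp) (by simpa using hST hA)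
  refine ⟨fun n hn => (hleast n hn).csInf_eq.trans hleastS.csInf_eq.symm, ?_⟩
  rw [lsr, hleastS.csInf_eq]
  refine IsLeast.csInf_eq ⟨⟨1, le_rfl, (hleast 1 le_rfl).1⟩, ?_⟩
  rintro x ⟨n, hn, hx⟩
  exact (hleast n hn).2 hx

theorem stmt_19 {N : ℕ} (S T : Set (Matrix (Fin N) (Fin N) ℝ)) (hS : IsIRU S)
    (hScomp : IsCompact S) (hSne : S.Nonempty)
    (hpos : ∀ A ∈ S, ∀ i j, 0 < A i j)
    (hTcomp : IsCompact T) (hST : S ⊆ T) (hTco : T ⊆ convexHull ℝ S) :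
    (∀ n : ℕ, 1 ≤ n →
        sInf {r : ℝ | ∃ A : Fin n → Matrix (Fin N) (Fin N) ℝ,
            (∀ i, A i ∈ T) ∧ r = specRad ((List.ofFn A).reverse.prod) ^ ((n : ℝ)⁻¹)}
          = sInf (specRad '' S)) ∧
    lsr T = sInf (specRad '' S) :=
  stmt_19_general S T hS hScomp hSne hpos hST hTco
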